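/- Product of two T-depth-1 blocks (commuting-Cliffords version): let C₁, C₂ be unitary 2^n × 2^n complex matrices and S₁, S₂ ⊆ {1,…,n} disjoint sets of qubits, and for each i ∈ S₁ ∪ S₂ let T̄_{(i)} ∈ {T_{(i)}, T_{(i)}†}. Suppose (i) C₁ Z_{(j)} C₁† = Z_{(j)} for all j ∈ S₂, (ii) C₂ Z_{(i)} C₂† = Z_{(i)} for all i ∈ S₁, and (iii) C₁ C₂ = C₂ C₁. Then (C₁ (∏_{i∈S₁} T̄_{(i)}) C₁†) · (C₂ (∏_{j∈S₂} T̄_{(j)}) C₂†) = (C₁C₂) (∏_{k∈S₁∪S₂} T̄_{(k)}) (C₁C₂)†, so the product of the two blocks is again a single conjugated parallel block of T/T† gates (T-depth 1). -/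
import Mathlib


open Matrix Complex

noncomputable section

/-- The single-qubit T gate `diag(1, e^{iπ/4})`. -/
def Tgate : Matrix (Fin 2) (Fin 2) ℂ :=
  !![1, 0; 0, Complex.exp (Real.pi * Complex.I / 4)]

/-- The single-qubit Pauli Z gate `diag(1, -1)`. -/
def Zgate : Matrix (Fin 2) (Fin 2) ℂ := !![1, 0; 0, -1]

/-- The n-qubit gate (a `2^n × 2^n` matrix, indexed by `Fin n → Fin 2`)
applying the single-qubit gate `A` on qubit `q` and the identity elsewhere. -/
def gateOn (n : ℕ) (q : Fin n) (A : Matrix (Fin 2) (Fin 2) ℂ) :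
    Matrix (Fin n → Fin 2) (Fin n → Fin 2) ℂ :=
  fun x y => A (x q) (y q) * ∏ i ∈ Finset.univ.erase q, (if x i = y i then (1 : ℂ) else 0)

/-- `R(P) = (1/2)(1 + e^{iπ/4})·I + (1/2)(1 − e^{iπ/4})·P`. -/
def Rop {m : Type*} [Fintype m] [DecidableEq m] (P : Matrix m m ℂ) : Matrix m m ℂ :=
  ((1 + Complex.exp (Real.pi * Complex.I / 4)) / 2) • (1 : Matrix m m ℂ)
    + ((1 - Complex.exp (Real.pi * Complex.I / 4)) / 2) • P

/-- `R†(P) = (1/2)(1 + e^{−iπ/4})·I + (1/2)(1 − e^{−iπ/4})·P`. -/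
def RopDag {m : Type*} [Fintype m] [DecidableEq m] (P : Matrix m m ℂ) : Matrix m m ℂ :=
  ((1 + Complex.exp (-(Real.pi * Complex.I / 4))) / 2) • (1 : Matrix m m ℂ)
    + ((1 - Complex.exp (-(Real.pi * Complex.I / 4))) / 2) • P

/-- The four single-qubit Pauli basis matrices `I, X, Y, Z`. -/
def pauli1 : Fin 4 → Matrix (Fin 2) (Fin 2) ℂ :=
  ![1, !![0, 1; 1, 0], !![0, -Complex.I; Complex.I, 0], !![1, 0; 0, -1]]

/-- The `n`-fold Kronecker product `Q_1 ⊗ ⋯ ⊗ Q_n` with each `Q_i ∈ {I, X, Y, Z}`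
selected by `f : Fin n → Fin 4`. -/
def pauliN (n : ℕ) (f : Fin n → Fin 4) : Matrix (Fin n → Fin 2) (Fin n → Fin 2) ℂ :=
  fun x y => ∏ i, pauli1 (f i) (x i) (y i)

/-- The channel representation of a `2^n × 2^n` matrix `U`: the `4^n × 4^n` matrix
with `(P, Q)` entry `2^{-n}·Tr(P U Q U†)`, indexed by the Pauli basis. -/
def chan (n : ℕ) (U : Matrix (Fin n → Fin 2) (Fin n → Fin 2) ℂ) :
    Matrix (Fin n → Fin 4) (Fin n → Fin 4) ℂ :=
  fun P Q => ((1 : ℂ) / 2 ^ n) * (pauliN n P * U * pauliN n Q * Uᴴ).trace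


lemma gateOn_conjTranspose (n : ℕ) (q : Fin n) (A : Matrix (Fin 2) (Fin 2) ℂ) :
    (gateOn n q A)ᴴ = gateOn n q Aᴴ := by
  ext x y
  simp only [gateOn, conjTranspose_apply, star_mul', star_prod, apply_ite (star : ℂ → ℂ),
    star_one, star_zero]
  simp [eq_comm]

lemma gateOn_one (n : ℕ) (q : Fin n) : gateOn n q (1 : Matrix (Fin 2) (Fin 2) ℂ) = 1 := by
  ext x y
  simp only [gateOn, Matrix.one_apply]
  rw [Finset.mul_prod_erase Finset.univ (fun i => if x i = y i then (1:ℂ) else 0)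
    (Finset.mem_univ q)]
  by_cases h : x = y
  · subst h; simp
  · obtain ⟨i, hi⟩ := Function.ne_iff.mp h
    rw [if_neg h, Finset.prod_eq_zero (Finset.mem_univ i)]
    simp [hi]

lemma gateOn_decomp (n : ℕ) (q : Fin n) (a b : ℂ) (A : Matrix (Fin 2) (Fin 2) ℂ)
    (h : A = a • 1 + b • Zgate) :
    gateOn n q A = a • (1 : Matrix (Fin n → Fin 2) (Fin n → Fin 2) ℂ) + b • gateOn n q Zgate := by
  have hadd : gateOn n q A = a • gateOn n q 1 + b • gateOn n q Zgate := by
    subst h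
    ext x y
    simp only [gateOn, Matrix.add_apply, Matrix.smul_apply, smul_eq_mul]
    ring
  rw [hadd, gateOn_one]

lemma Tgate_decomp : Tgate = ((1 + Complex.exp (Real.pi * Complex.I / 4)) / 2) • 1
    + ((1 - Complex.exp (Real.pi * Complex.I / 4)) / 2) • Zgate := by
  ext i j
  fin_cases i <;> fin_cases j <;>
    simp [Tgate, Zgate, Matrix.one_apply] <;> ring

lemma TgateH_decomp : Tgateᴴ = ((1 + starRingEnd ℂ (Complex.exp (Real.pi * Complex.I / 4))) / 2) • 1
    + ((1 - starRingEnd ℂ (Complex.exp (Real.pi * Complex.I / 4))) / 2) • Zgate := by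
  ext i j
  fin_cases i <;> fin_cases j <;>
    simp [Tgate, Zgate, Matrix.one_apply, conjTranspose_apply] <;> ring

lemma commute_of_conj_fix {m : Type*} [Fintype m] [DecidableEq m]
    {C Z M : Matrix m m ℂ} (hC : C ∈ Matrix.unitaryGroup m ℂ)
    (hZ : C * Z * Cᴴ = Z) (hM : ∃ a b : ℂ, M = a • 1 + b • Z) :
    C * M = M * C := by
  obtain ⟨a, b, rfl⟩ := hM
  have hcz : C * Z = Z * C := by
    have h1 : Cᴴ * C = 1 := by
      simpa [Matrix.star_eq_conjTranspose] using hC.1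
    calc C * Z = C * Z * (Cᴴ * C) := by rw [h1, mul_one]
    _ = (C * Z * Cᴴ) * C := by simp only [mul_assoc]
    _ = Z * C := by rw [hZ]
  simp only [mul_add, add_mul, Matrix.mul_smul, Matrix.smul_mul, mul_one, one_mul, hcz]

lemma Tb_decomp (n : ℕ) (i : Fin n) (Tb : Fin n → Matrix (Fin n → Fin 2) (Fin n → Fin 2) ℂ)
    (hTb : ∀ i, Tb i = gateOn n i Tgate ∨ Tb i = (gateOn n i Tgate)ᴴ) :
    ∃ a b : ℂ, Tb i = a • 1 + b • gateOn n i Zgate := by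
  rcases hTb i with h | h
  · exact ⟨_, _, by rw [h, gateOn_decomp n i _ _ _ Tgate_decomp]⟩
  · exact ⟨_, _, by rw [h, gateOn_conjTranspose, gateOn_decomp n i _ _ _ TgateH_decomp]⟩

/-- product of two T-depth-1 blocks (commuting-Cliffords version):
`(C₁ (∏_{i∈S₁} T̄_{(i)}) C₁†)·(C₂ (∏_{j∈S₂} T̄_{(j)}) C₂†)
  = (C₁C₂) (∏_{k∈S₁∪S₂} T̄_{(k)}) (C₁C₂)†`. -/
theorem product_blocks_commuting_cliffords (n : ℕ)
    (C₁ C₂ : Matrix (Fin n → Fin 2) (Fin n → Fin 2) ℂ)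
    (hC₁ : C₁ ∈ Matrix.unitaryGroup (Fin n → Fin 2) ℂ)
    (hC₂ : C₂ ∈ Matrix.unitaryGroup (Fin n → Fin 2) ℂ)
    (S₁ S₂ : Finset (Fin n)) (hdisj : Disjoint S₁ S₂)
    (Tb : Fin n → Matrix (Fin n → Fin 2) (Fin n → Fin 2) ℂ)
    (hTb : ∀ i, Tb i = gateOn n i Tgate ∨ Tb i = (gateOn n i Tgate)ᴴ)
    (hcomm : ∀ i j, i ≠ j → Commute (Tb i) (Tb j))
    (h₁ : ∀ j ∈ S₂, C₁ * gateOn n j Zgate * C₁ᴴ = gateOn n j Zgate)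
    (h₂ : ∀ i ∈ S₁, C₂ * gateOn n i Zgate * C₂ᴴ = gateOn n i Zgate)
    (hCC : C₁ * C₂ = C₂ * C₁) :
    (C₁ * S₁.noncommProd Tb (fun i _ j _ h => hcomm i j h) * C₁ᴴ) *
      (C₂ * S₂.noncommProd Tb (fun i _ j _ h => hcomm i j h) * C₂ᴴ) =
    (C₁ * C₂) * (S₁ ∪ S₂).noncommProd Tb (fun i _ j _ h => hcomm i j h) * (C₁ * C₂)ᴴ := by
  classical
  set P₁ := S₁.noncommProd Tb (fun i _ j _ h => hcomm i j h) with hP₁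
  set P₂ := S₂.noncommProd Tb (fun i _ j _ h => hcomm i j h) with hP₂
  have hCC₁ : C₁ᴴ * C₁ = 1 := by simpa [Matrix.star_eq_conjTranspose] using hC₁.1
  have hC₁C : C₁ * C₁ᴴ = 1 := by simpa [Matrix.star_eq_conjTranspose] using hC₁.2
  have k1 : C₂ * P₁ = P₁ * C₂ := by
    have := Finset.noncommProd_commute S₁ Tb (fun i _ j _ h => hcomm i j h) C₂
      (fun i hi => (commute_of_conj_fix hC₂ (h₂ i hi) (Tb_decomp n i Tb hTb)))
    exact this.eq
  have k1' : C₁ * P₂ = P₂ * C₁ := by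
    have := Finset.noncommProd_commute S₂ Tb (fun i _ j _ h => hcomm i j h) C₁
      (fun j hj => (commute_of_conj_fix hC₁ (h₁ j hj) (Tb_decomp n j Tb hTb)))
    exact this.eq
  have k2 : C₁ᴴ * P₂ = P₂ * C₁ᴴ := by
    calc C₁ᴴ * P₂ = C₁ᴴ * P₂ * (C₁ * C₁ᴴ) := by rw [hC₁C, mul_one]
    _ = C₁ᴴ * (P₂ * C₁) * C₁ᴴ := by simp only [mul_assoc]
    _ = C₁ᴴ * (C₁ * P₂) * C₁ᴴ := by rw [k1']
    _ = (C₁ᴴ * C₁) * P₂ * C₁ᴴ := by simp only [mul_assoc]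
    _ = P₂ * C₁ᴴ := by rw [hCC₁, one_mul]
  have k3 : C₁ᴴ * C₂ = C₂ * C₁ᴴ := by
    calc C₁ᴴ * C₂ = C₁ᴴ * C₂ * (C₁ * C₁ᴴ) := by rw [hC₁C, mul_one]
    _ = C₁ᴴ * (C₂ * C₁) * C₁ᴴ := by simp only [mul_assoc]
    _ = C₁ᴴ * (C₁ * C₂) * C₁ᴴ := by rw [hCC]
    _ = (C₁ᴴ * C₁) * C₂ * C₁ᴴ := by simp only [mul_assoc]
    _ = C₂ * C₁ᴴ := by rw [hCC₁, one_mul]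
  have k4 : C₁ᴴ * C₂ᴴ = C₂ᴴ * C₁ᴴ := by
    have := congrArg Matrix.conjTranspose hCC
    simpa [Matrix.conjTranspose_mul] using this.symm
  have hu : (S₁ ∪ S₂).noncommProd Tb (fun i _ j _ h => hcomm i j h) = P₁ * P₂ :=
    Finset.noncommProd_union_of_disjoint hdisj Tb _
  rw [hu, Matrix.conjTranspose_mul]
  calc C₁ * P₁ * C₁ᴴ * (C₂ * P₂ * C₂ᴴ)
      = C₁ * (P₁ * (C₁ᴴ * C₂ * (P₂ * C₂ᴴ))) := by simp only [mul_assoc]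
    _ = C₁ * (P₁ * (C₂ * C₁ᴴ * (P₂ * C₂ᴴ))) := by rw [k3]
    _ = C₁ * (P₁ * (C₂ * (C₁ᴴ * P₂ * C₂ᴴ))) := by simp only [mul_assoc]
    _ = C₁ * (P₁ * (C₂ * (P₂ * C₁ᴴ * C₂ᴴ))) := by rw [k2]
    _ = C₁ * (P₁ * C₂ * (P₂ * (C₁ᴴ * C₂ᴴ))) := by simp only [mul_assoc]
    _ = C₁ * (C₂ * P₁ * (P₂ * (C₁ᴴ * C₂ᴴ))) := by rw [k1]
    _ = C₁ * (C₂ * P₁ * (P₂ * (C₂ᴴ * C₁ᴴ))) := by rw [k4]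
    _ = C₁ * C₂ * (P₁ * P₂) * (C₂ᴴ * C₁ᴴ) := by simp only [mul_assoc]
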